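/- Let p be a prime and let J ∈ ℤ^{m×m} be a direct sum of Jordan blocks J₁ ⊕ ⋯ ⊕ J_d with integer eigenvalues, at least one of which is nonzero. Then the sequence n ↦ ν_p(J^{n+1}) − ν_p(J^n) is eventually periodic. -/

import Mathlib

/-!
Write `vᵢ = ν_p(λᵢ)`. The `(a, a + k)` entry of `Jᵢ^n` is `C(n, k) λᵢ^(n - k)`, of valuation
`ν_p(C(n, k)) + (n - k) vᵢ`. Since the diagonal entry `λᵢ^n` has valuation `n vᵢ`, truncating
`ν_p(C(n, k))` at any `K ≥ k vᵢ` does not change the minimum over the block, so for large `n`,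
`ν_p(J^n)` is a finite minimum of the functions `min(ν_p(C(n, k)), K) + (n - k) vᵢ`. Each of them is
periodic plus linear, because `C(n + p^(K + k), k) ≡ C(n, k) mod p^K` by Vandermonde's identity.
Functions with `f (n + T) = f n + c` for large `n` are closed under `min` (of two with different
slopes, the smaller one eventually wins), and their first differences are eventually periodic.
-/

/-- The `p`-adic valuation of a nonzero integer matrix: the minimum of the `p`-adic
valuations of its nonzero entries. -/
noncomputable def matPadicVal (p : ℕ) {a b : Type*} [Fintype a] [Fintype b]
    (M : Matrix a b ℤ) : ℕ :=
  sInf {v : ℕ | ∃ i j, M i j ≠ 0 ∧ padicValInt p (M i j) = v}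

/-- A single `s × s` Jordan block with eigenvalue `λ`. -/
def jordanBlock (s : ℕ) (lam : ℤ) : Matrix (Fin s) (Fin s) ℤ :=
  fun i j => if i = j then lam else if (i : ℕ) + 1 = (j : ℕ) then 1 else 0

open Filter Finset Matrix

lemma apply_add_mul_eq {f : ℕ → ℤ} {T N : ℕ} {c : ℤ} (h : ∀ n ≥ N, f (n + T) = f n + c)
    (q : ℕ) : ∀ n ≥ N, f (n + q * T) = f n + q * c := by
  intro n hn
  induction q with
  | zero => simp
  | succ q ih =>
    rw [Nat.succ_mul, ← add_assoc, h _ (by omega), ih]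
    push_cast
    ring

def EventuallyQuasiPeriodic (f : ℕ → ℤ) : Prop :=
  ∃ T, 0 < T ∧ ∃ c : ℤ, ∀ᶠ n in atTop, f (n + T) = f n + c

namespace EventuallyQuasiPeriodic

variable {f g : ℕ → ℤ}

lemma exists_common_period (hf : EventuallyQuasiPeriodic f) (hg : EventuallyQuasiPeriodic g) :
    ∃ T, 0 < T ∧ ∃ a b : ℤ, ∀ᶠ n in atTop, f (n + T) = f n + a ∧ g (n + T) = g n + b := by
  obtain ⟨T₁, hT₁, a, hf⟩ := hf
  obtain ⟨T₂, hT₂, b, hg⟩ := hg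
  obtain ⟨N₁, hN₁⟩ := eventually_atTop.1 hf
  obtain ⟨N₂, hN₂⟩ := eventually_atTop.1 hg
  refine ⟨T₂ * T₁, Nat.mul_pos hT₂ hT₁, T₂ * a, T₁ * b, eventually_atTop.2 ⟨max N₁ N₂, ?_⟩⟩
  intro n hn
  refine ⟨apply_add_mul_eq hN₁ T₂ n (le_of_max_le_left hn), ?_⟩
  rw [mul_comm T₂]
  exact apply_add_mul_eq hN₂ T₁ n (le_of_max_le_right hn)

lemma congr (hf : EventuallyQuasiPeriodic f) (hfg : f =ᶠ[atTop] g) :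
    EventuallyQuasiPeriodic g := by
  obtain ⟨T, hT, c, hf⟩ := hf
  refine ⟨T, hT, c, ?_⟩
  filter_upwards [hf, hfg, (tendsto_add_atTop_nat T).eventually hfg] with n h hn hnT
  rw [← hn, ← hnT, h]

lemma eventually_le_of_lt {T : ℕ} {a b : ℤ} (hT : 0 < T) (hab : a < b)
    (h : ∀ᶠ n in atTop, f (n + T) = f n + a ∧ g (n + T) = g n + b) :
    ∀ᶠ n in atTop, f n ≤ g n := by
  obtain ⟨N, hN⟩ := eventually_atTop.1 h
  have hdiff : ∀ n ≥ N, (f - g) (n + T) = (f - g) n + (a - b) := fun n hn => by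
    simp only [Pi.sub_apply, (hN n hn).1, (hN n hn).2]
    ring
  obtain ⟨M, hM⟩ := exists_le ((range T).image fun r => (f - g) (N + r))
  refine eventually_atTop.2 ⟨N + T * M.toNat, fun n hn => ?_⟩
  have hn_eq : n = (N + (n - N) % T) + (n - N) / T * T := by
    have := Nat.mod_add_div' (n - N) T
    omega
  set q := (n - N) / T
  have hq : M.toNat ≤ q := (Nat.le_div_iff_mul_le hT).2 (by rw [mul_comm]; omega)
  have hbound : (f - g) (N + (n - N) % T) ≤ M :=
    hM _ (mem_image_of_mem _ (mem_range.2 (Nat.mod_lt _ hT)))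
  have hval := apply_add_mul_eq hdiff q (N + (n - N) % T) (Nat.le_add_right N _)
  rw [← hn_eq] at hval
  have hMq : M ≤ q := Int.toNat_le.1 hq
  have hfg : (f - g) n ≤ 0 := by
    rw [hval]
    nlinarith
  exact sub_nonpos.1 hfg

lemma inf (hf : EventuallyQuasiPeriodic f) (hg : EventuallyQuasiPeriodic g) :
    EventuallyQuasiPeriodic (f ⊓ g) := by
  obtain ⟨T, hT, a, b, h⟩ := exists_common_period hf hg
  rcases lt_trichotomy a b with hab | rfl | hba
  · refine hf.congr ?_
    filter_upwards [eventually_le_of_lt hT hab h] with n hn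
    exact (inf_eq_left.2 hn).symm
  · refine ⟨T, hT, a, ?_⟩
    filter_upwards [h] with n ⟨hfn, hgn⟩
    simp only [Pi.inf_apply, hfn, hgn]
    exact min_add_add_right _ _ _
  · refine hg.congr ?_
    filter_upwards [eventually_le_of_lt hT hba (h.mono fun _ h => h.symm)] with n hn
    exact (inf_eq_right.2 hn).symm

lemma finset_inf' {ι : Type*} {s : Finset ι} (hs : s.Nonempty) {F : ι → ℕ → ℤ}
    (hF : ∀ i ∈ s, EventuallyQuasiPeriodic (F i)) :
    EventuallyQuasiPeriodic (s.inf' hs F) :=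
  inf'_induction hs F (fun _ h₁ _ h₂ => h₁.inf h₂) hF

lemma exists_periodic_diff (hf : EventuallyQuasiPeriodic f) :
    ∃ n₀ T : ℕ, 1 ≤ T ∧ ∀ n, n₀ ≤ n → f (n + T + 1) - f (n + T) = f (n + 1) - f n := by
  obtain ⟨T, hT, c, hf⟩ := hf
  obtain ⟨N, hN⟩ := eventually_atTop.1 hf
  refine ⟨N, T, hT, fun n hn => ?_⟩
  rw [add_right_comm, hN _ (by omega), hN n hn]
  ring

end EventuallyQuasiPeriodic

lemma Nat.pow_dvd_choose_prime_pow {p N j : ℕ} (hp : p.Prime) (hj0 : j ≠ 0) (hjN : j ≤ N) :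
    p ^ (N - j) ∣ (p ^ N).choose j := by
  have hjp : j ≤ p ^ N := hjN.trans (Nat.lt_pow_self hp.one_lt).le
  rw [hp.pow_dvd_iff_le_factorization (Nat.choose_pos hjp).ne',
    Nat.factorization_choose_prime_pow hp hjp hj0]
  have := Nat.factorization_lt p hj0
  omega

lemma Nat.choose_add_prime_pow_modEq {p : ℕ} (hp : p.Prime) (K n k : ℕ) :
    (n + p ^ (K + k)).choose k ≡ n.choose k [MOD p ^ K] := by
  rw [Nat.add_choose_eq, Finset.Nat.sum_antidiagonal_eq_sum_range_succ
    (fun i j => n.choose i * (p ^ (K + k)).choose j), sum_range_succ, Nat.sub_self,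
    Nat.choose_zero_right, mul_one]
  conv_rhs => rw [← zero_add (n.choose k)]
  refine Nat.ModEq.add_right _ (Nat.modEq_zero_iff_dvd.2 ?_)
  refine dvd_sum fun i hi => Dvd.dvd.mul_left ?_ _
  have hik := mem_range.1 hi
  exact (pow_dvd_pow p (by omega)).trans
    (Nat.pow_dvd_choose_prime_pow hp (by omega) (by omega : k - i ≤ K + k))

lemma min_padicValNat_le_of_modEq {p K a b : ℕ} [Fact p.Prime] (ha : a ≠ 0) (hb : b ≠ 0)
    (h : a ≡ b [MOD p ^ K]) : min (padicValNat p a) K ≤ min (padicValNat p b) K := by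
  refine le_min ?_ (min_le_right _ _)
  rw [← padicValNat_dvd_iff_le hb, ← h.dvd_iff (pow_dvd_pow p (min_le_right _ _)),
    padicValNat_dvd_iff_le ha]
  exact min_le_left _ _

lemma min_padicValNat_eq_of_modEq {p K a b : ℕ} [Fact p.Prime] (ha : a ≠ 0) (hb : b ≠ 0)
    (h : a ≡ b [MOD p ^ K]) : min (padicValNat p a) K = min (padicValNat p b) K :=
  (min_padicValNat_le_of_modEq ha hb h).antisymm (min_padicValNat_le_of_modEq hb ha h.symm)

lemma min_padicValNat_choose_add_prime_pow {p : ℕ} [hp : Fact p.Prime] {k n : ℕ} (K : ℕ)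
    (hkn : k ≤ n) :
    min (padicValNat p ((n + p ^ (K + k)).choose k)) K = min (padicValNat p (n.choose k)) K :=
  min_padicValNat_eq_of_modEq (Nat.choose_pos (by omega)).ne' (Nat.choose_pos hkn).ne'
    (Nat.choose_add_prime_pow_modEq hp.out K n k)

lemma jordanBlock_mul_apply {s : ℕ} (lam : ℤ) (A : Matrix (Fin s) (Fin s) ℤ) (a b : Fin s) :
    (A * jordanBlock s lam) a b =
      A a b * lam + if h : 0 < (b : ℕ) then A a ⟨b - 1, by omega⟩ else 0 := by
  rw [Matrix.mul_apply]
  split_ifs with hb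
  · rw [Fintype.sum_eq_add b ⟨b - 1, by omega⟩ (by simp only [ne_eq, Fin.ext_iff]; omega)]
    · simp only [jordanBlock, ↓reduceIte, Fin.ext_iff, mul_ite, mul_one, mul_zero, add_right_inj]
      omega
    · intro c hc
      simp only [ne_eq, Fin.ext_iff, jordanBlock, mul_ite, mul_one, mul_zero] at hc ⊢
      omega
  · rw [Fintype.sum_eq_single b]
    · simp [jordanBlock]
    · intro c hc
      simp only [ne_eq, Fin.ext_iff, jordanBlock, mul_ite, mul_one, mul_zero] at hc ⊢
      omega

lemma choose_mul_pow_sub_mul {R : Type*} [CommSemiring R] (x : R) (n k : ℕ) :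
    (n.choose k : R) * x ^ (n - k) * x = n.choose k * x ^ (n + 1 - k) := by
  rcases le_or_gt k n with hkn | hnk
  · rw [mul_assoc, ← pow_succ, Nat.sub_add_comm hkn]
  · simp [Nat.choose_eq_zero_of_lt hnk]

lemma jordanBlock_pow_apply (s : ℕ) (lam : ℤ) (n : ℕ) (a b : Fin s) :
    (jordanBlock s lam ^ n) a b =
      if (a : ℕ) ≤ b then (n.choose (b - a) : ℤ) * lam ^ (n - (b - a)) else 0 := by
  induction n generalizing b with
  | zero =>
    rw [pow_zero, Matrix.one_apply]
    rcases eq_or_ne a b with rfl | hab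
    · simp
    · have : (a : ℕ) ≠ b := Fin.val_ne_of_ne hab
      rw [if_neg hab]
      split_ifs
      · rw [Nat.choose_eq_zero_of_lt (by omega), Nat.cast_zero, zero_mul]
      · rfl
  | succ n ih =>
    simp only [pow_succ, jordanBlock_mul_apply, ih]
    rcases lt_trichotomy (a : ℕ) b with hab | hab | hab
    · obtain ⟨k, hk⟩ : ∃ k, (b : ℕ) - a = k + 1 := ⟨b - a - 1, by omega⟩
      have hk' : (b : ℕ) - 1 - a = k := by omega
      rw [dif_pos (by omega), if_pos hab.le, if_pos hab.le, if_pos (Nat.le_sub_one_of_lt hab), hk,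
        hk', choose_mul_pow_sub_mul, Nat.choose_succ_succ', Nat.cast_add, Nat.add_sub_add_right]
      ring
    · simp +contextual [hab, pow_succ, Nat.le_sub_one_iff_lt]
    · simp [hab.not_ge, show ¬ (a : ℕ) ≤ b - 1 by omega]

section matPadicVal

variable {p : ℕ} {a b : Type*} [Fintype a] [Fintype b] {M : Matrix a b ℤ}

lemma matPadicVal_le {i : a} {j : b} (h : M i j ≠ 0) : matPadicVal p M ≤ padicValInt p (M i j) :=
  Nat.sInf_le ⟨i, j, h, rfl⟩

lemma exists_padicValInt_eq_matPadicVal (h : ∃ i j, M i j ≠ 0) :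
    ∃ i j, M i j ≠ 0 ∧ padicValInt p (M i j) = matPadicVal p M := by
  obtain ⟨i, j, hij⟩ := h
  exact Nat.sInf_mem (s := {v | ∃ i j, M i j ≠ 0 ∧ padicValInt p (M i j) = v}) ⟨_, i, j, hij, rfl⟩

end matPadicVal

lemma padicValInt_choose_mul_pow {p : ℕ} [Fact p.Prime] {n k : ℕ} {lam : ℤ} (hlam : lam ≠ 0)
    (hkn : k ≤ n) :
    (n.choose k : ℤ) * lam ^ (n - k) ≠ 0 ∧
      (padicValInt p ((n.choose k : ℤ) * lam ^ (n - k)) : ℤ) =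
        padicValNat p (n.choose k) + ((n : ℤ) - k) * padicValInt p lam := by
  have hchoose : (n.choose k : ℤ) ≠ 0 := Nat.cast_ne_zero.2 (Nat.choose_pos hkn).ne'
  refine ⟨mul_ne_zero hchoose (pow_ne_zero _ hlam), ?_⟩
  rw [padicValInt.mul hchoose (pow_ne_zero _ hlam), padicValInt.of_nat, padicValInt,
    Int.natAbs_pow, padicValNat.pow, ← padicValInt, Nat.cast_add, Nat.cast_mul, Nat.cast_sub hkn]

def truncSuperdiagVal (p K : ℕ) (lam : ℤ) (k n : ℕ) : ℤ :=
  (min (padicValNat p (n.choose k)) K : ℕ) + ((n : ℤ) - k) * padicValInt p lam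

section blockDiagonal

variable {ι : Type*} [Fintype ι] [DecidableEq ι] {s : ι → ℕ} {lam : ι → ℤ} {n : ℕ}

local notation "J" => blockDiagonal' fun i => jordanBlock (s i) (lam i)

lemma blockDiagonal'_jordanBlock_pow_apply (n : ℕ) (i : ι) (a b : Fin (s i)) :
    (J ^ n) ⟨i, a⟩ ⟨i, b⟩ =
      if (a : ℕ) ≤ b then (n.choose (b - a) : ℤ) * lam i ^ (n - (b - a)) else 0 := by
  rw [← blockDiagonal'_pow, blockDiagonal'_apply_eq, Pi.pow_apply, jordanBlock_pow_apply]

lemma blockDiagonal'_jordanBlock_pow_apply_ne_zero {p : ℕ} [Fact p.Prime] (hn : ∀ i, s i ≤ n)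
    {i : ι} {a b : Fin (s i)} (hab : (a : ℕ) ≤ b) (hlam : lam i ≠ 0) :
    (J ^ n) ⟨i, a⟩ ⟨i, b⟩ ≠ 0 ∧ (padicValInt p ((J ^ n) ⟨i, a⟩ ⟨i, b⟩) : ℤ) =
      padicValNat p (n.choose (b - a)) + ((n : ℤ) - (b - a : ℕ)) * padicValInt p (lam i) := by
  rw [blockDiagonal'_jordanBlock_pow_apply, if_pos hab]
  exact padicValInt_choose_mul_pow hlam (by have := hn i; omega)

variable (s lam) in
/-- `⟨i, k⟩` stands for the `k`-th superdiagonal of the `i`-th block, which is nonzero in `J ^ n`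
for `n ≥ s i` exactly when `lam i ≠ 0`. -/
def nonzeroSuperdiagonals : Finset (Σ i, Fin (s i)) :=
  univ.filter fun x => lam x.1 ≠ 0

variable {p : ℕ} [Fact p.Prime]

lemma matPadicVal_le_truncSuperdiagVal {K : ℕ} (hK : ∀ i, s i * padicValInt p (lam i) ≤ K)
    (hn : ∀ i, s i ≤ n) {x : Σ i, Fin (s i)} (hx : x ∈ nonzeroSuperdiagonals s lam) :
    (matPadicVal p (J ^ n) : ℤ) ≤ truncSuperdiagVal p K (lam x.1) x.2 n := by
  obtain ⟨i, k⟩ := x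
  have hlam : lam i ≠ 0 := (mem_filter.1 hx).2
  have h0 : 0 < s i := k.pos
  dsimp only [truncSuperdiagVal]
  by_cases hchoose : padicValNat p (n.choose k) ≤ K
  · obtain ⟨hne, hval⟩ := blockDiagonal'_jordanBlock_pow_apply_ne_zero (p := p) hn
      (a := ⟨0, h0⟩) (b := k) (Nat.zero_le _) hlam
    have := matPadicVal_le (p := p) hne
    rw [Nat.sub_zero] at hval
    rw [min_eq_left hchoose]
    omega
  · obtain ⟨hne, hval⟩ := blockDiagonal'_jordanBlock_pow_apply_ne_zero (p := p) hn
      (a := ⟨0, h0⟩) (b := ⟨0, h0⟩) le_rfl hlam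
    have := matPadicVal_le (p := p) hne
    simp only [Nat.sub_self, Nat.choose_zero_right, padicValNat_one_right, Nat.cast_zero,
      sub_zero, zero_add] at hval
    have hkK : ((k : ℕ) : ℤ) * padicValInt p (lam i) ≤ K := by
      exact_mod_cast (Nat.mul_le_mul_right _ k.isLt.le).trans (hK i)
    rw [min_eq_right (le_of_not_ge hchoose), sub_mul]
    linarith

lemma inf'_truncSuperdiagVal_le_padicValInt {K : ℕ} (hn : ∀ i, s i ≤ n)
    (hS : (nonzeroSuperdiagonals s lam).Nonempty) {x y : Σ i, Fin (s i)} (hxy : (J ^ n) x y ≠ 0) :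
    (nonzeroSuperdiagonals s lam).inf' hS (fun x => truncSuperdiagVal p K (lam x.1) x.2 n) ≤
      padicValInt p ((J ^ n) x y) := by
  obtain ⟨i, a⟩ := x
  obtain ⟨j, b⟩ := y
  obtain rfl : i = j := by
    by_contra hij
    rw [← blockDiagonal'_pow] at hxy
    exact hxy (blockDiagonal'_apply_ne _ _ _ hij)
  have hab : (a : ℕ) ≤ b := by
    by_contra hab
    rw [blockDiagonal'_jordanBlock_pow_apply, if_neg hab] at hxy
    exact hxy rfl
  have hlam : lam i ≠ 0 := by
    rintro hlam
    rw [blockDiagonal'_jordanBlock_pow_apply, if_pos hab, hlam,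
      zero_pow (by have := hn i; omega), mul_zero] at hxy
    exact hxy rfl
  have hmem : (⟨i, ⟨b - a, by omega⟩⟩ : Σ i, Fin (s i)) ∈ nonzeroSuperdiagonals s lam :=
    mem_filter.2 ⟨mem_univ _, hlam⟩
  calc _ ≤ truncSuperdiagVal p K (lam i) (b - a) n := inf'_le _ hmem
    _ ≤ padicValNat p (n.choose (b - a)) + ((n : ℤ) - (b - a : ℕ)) * padicValInt p (lam i) :=
      add_le_add_left (Nat.cast_le.2 (min_le_left _ _)) _
    _ = padicValInt p ((J ^ n) ⟨i, a⟩ ⟨i, b⟩) :=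
      (blockDiagonal'_jordanBlock_pow_apply_ne_zero hn hab hlam).2.symm

theorem matPadicVal_blockDiagonal'_jordanBlock_pow {K : ℕ}
    (hK : ∀ i, s i * padicValInt p (lam i) ≤ K) (hn : ∀ i, s i ≤ n)
    (hS : (nonzeroSuperdiagonals s lam).Nonempty) :
    (matPadicVal p (J ^ n) : ℤ) =
      (nonzeroSuperdiagonals s lam).inf' hS fun x => truncSuperdiagVal p K (lam x.1) x.2 n := by
  refine le_antisymm (le_inf' _ _ fun x hx => matPadicVal_le_truncSuperdiagVal hK hn hx) ?_
  obtain ⟨⟨i, k⟩, hx⟩ := hS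
  obtain ⟨x, y, hxy, hval⟩ := exists_padicValInt_eq_matPadicVal (p := p)
    ⟨_, _, (blockDiagonal'_jordanBlock_pow_apply_ne_zero (p := p) hn (le_refl (k : ℕ))
      (mem_filter.1 hx).2).1⟩
  rw [← hval]
  exact inf'_truncSuperdiagVal_le_padicValInt hn _ hxy

end blockDiagonal

lemma eventuallyQuasiPeriodic_truncSuperdiagVal (p : ℕ) [hp : Fact p.Prime] (K : ℕ) (lam : ℤ)
    (k : ℕ) : EventuallyQuasiPeriodic (truncSuperdiagVal p K lam k) := by
  refine ⟨p ^ (K + k), pow_pos hp.out.pos _, p ^ (K + k) * padicValInt p lam,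
    eventually_atTop.2 ⟨k, fun n hn => ?_⟩⟩
  rw [truncSuperdiagVal, truncSuperdiagVal, min_padicValNat_choose_add_prime_pow K hn]
  push_cast
  ring

/-- For a direct sum `J = J₁ ⊕ ⋯ ⊕ J_d` of Jordan blocks with integer eigenvalues,
at least one of which is nonzero, the sequence `n ↦ ν_p(J^{n+1}) - ν_p(J^n)` is
eventually periodic. -/
theorem matPadicVal_jordanSum_diff_eventuallyPeriodic (p : ℕ) (hp : p.Prime)
    (d : ℕ) (s : Fin d → ℕ) (hs : ∀ i, 0 < s i) (lam : Fin d → ℤ)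
    (hlam : ∃ i, lam i ≠ 0)
    (J : Matrix (Σ i, Fin (s i)) (Σ i, Fin (s i)) ℤ)
    (hJ : J = Matrix.blockDiagonal' fun i => jordanBlock (s i) (lam i)) :
    ∃ n₀ T : ℕ, 1 ≤ T ∧ ∀ n, n₀ ≤ n →
      (matPadicVal p (J ^ (n + T + 1)) : ℤ) - matPadicVal p (J ^ (n + T)) =
        (matPadicVal p (J ^ (n + 1)) : ℤ) - matPadicVal p (J ^ n) := by
  have : Fact p.Prime := ⟨hp⟩
  subst hJ
  have hS : (nonzeroSuperdiagonals s lam).Nonempty := by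
    obtain ⟨i, hi⟩ := hlam
    exact ⟨⟨i, ⟨0, hs i⟩⟩, mem_filter.2 ⟨mem_univ _, hi⟩⟩
  obtain ⟨K, hK⟩ : ∃ K, ∀ i, s i * padicValInt p (lam i) ≤ K :=
    ⟨∑ j, s j * padicValInt p (lam j), fun i =>
      single_le_sum (f := fun j => s j * padicValInt p (lam j)) (fun _ _ => Nat.zero_le _)
        (mem_univ i)⟩
  have hquasi : EventuallyQuasiPeriodic fun n =>
      (matPadicVal p (blockDiagonal' (fun i => jordanBlock (s i) (lam i)) ^ n) : ℤ) := by
    refine (EventuallyQuasiPeriodic.finset_inf' hS fun x _ =>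
      eventuallyQuasiPeriodic_truncSuperdiagVal p K (lam x.1) x.2).congr ?_
    filter_upwards [eventually_all.2 fun i => eventually_ge_atTop (s i)] with n hn
    rw [Finset.inf'_apply, matPadicVal_blockDiagonal'_jordanBlock_pow hK hn hS]
  exact hquasi.exists_periodic_diff
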